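/- Under the hypotheses of the previous statement, if additionally the matrix L Q Lᵀ + K R Kᵀ is positive definite, then the spectral radius of LA is strictly less than 1; hence for the noise-free error dynamics x̃_{k+1} = (LA) x̃_k, the error x̃_k converges to 0 for any initial error. -/

import Mathlib

/-! If `w` is a left eigenvector of `M = LA` for the eigenvalue `μ`, pairing the Lyapunov identity
`P = M P Mᴴ + S` with `w` gives `w*Pw = |μ|² w*Pw + w*Sw`, and positivity of `P` and `S` forces
`|μ| < 1`. Gelfand's formula then makes the powers of `M` tend to zero. -/

open Matrix Filter Topology
open scoped ComplexOrder

theorem tendsto_pow_atTop_nhds_zero_of_norm_spectrum_lt_one {A : Type*} [NormedRing A]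
    [NormedAlgebra ℂ A] [CompleteSpace A] {a : A} (h : ∀ z ∈ spectrum ℂ a, ‖z‖ < 1) :
    Tendsto (a ^ ·) atTop (𝓝 0) := by
  rcases subsingleton_or_nontrivial A with hA | hA
  · simpa only [Subsingleton.elim _ (0 : A)] using tendsto_const_nhds
  have hρ : spectralRadius ℂ a < 1 := by
    exact_mod_cast spectrum.spectralRadius_lt_of_forall_lt a (r := 1) fun z hz ↦ by
      exact_mod_cast h z hz
  obtain ⟨c, hρc, hc1⟩ := ENNReal.lt_iff_exists_nnreal_btwn.mp hρ
  have hbound : ∀ᶠ k : ℕ in atTop, ‖a ^ k‖ ≤ (c : ℝ) ^ k := by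
    have hgelfand := spectrum.pow_nnnorm_pow_one_div_tendsto_nhds_spectralRadius a
    filter_upwards [hgelfand.eventually_lt_const hρc, eventually_ne_atTop 0] with k hk hk0
    have : (‖a ^ k‖₊ : ENNReal) ≤ (c : ENNReal) ^ k := by
      rw [← ENNReal.rpow_inv_natCast_pow hk0 (‖a ^ k‖₊ : ENNReal)]
      rw [one_div] at hk
      exact pow_le_pow_left₀ bot_le hk.le k
    exact_mod_cast this
  exact squeeze_zero_norm' hbound
    (tendsto_pow_atTop_nhds_zero_of_lt_one c.2 (by exact_mod_cast hc1))

namespace Matrix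

variable {n : Type*} [Fintype n]

theorem exists_mulVec_eq_smul_of_mem_spectrum {K : Type*} [Field K] [DecidableEq n]
    {A : Matrix n n K} {μ : K} (hμ : μ ∈ spectrum K A) : ∃ v ≠ 0, A *ᵥ v = μ • v := by
  rw [← spectrum_toLin', ← Module.End.hasEigenvalue_iff_mem_spectrum] at hμ
  obtain ⟨v, hv⟩ := hμ.exists_hasEigenvector
  exact ⟨v, hv.2, by simpa using hv.apply_eq_smul⟩

theorem norm_lt_one_of_mem_spectrum_of_posDef_lyapunov {𝕜 : Type*} [RCLike 𝕜] [DecidableEq n]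
    {N P S : Matrix n n 𝕜} (hP : P.PosDef) (hS : S.PosDef) (hlyap : P = N * P * Nᴴ + S)
    {μ : 𝕜} (hμ : μ ∈ spectrum 𝕜 N) : ‖μ‖ < 1 := by
  obtain ⟨w, hw0, hw⟩ : ∃ w ≠ 0, Nᴴ *ᵥ w = star μ • w := by
    refine exists_mulVec_eq_smul_of_mem_spectrum ?_
    rw [← star_eq_conjTranspose, spectrum.map_star]
    simpa using hμ
  have hwN : star w ᵥ* N = μ • star w := by
    rw [← conjTranspose_conjTranspose N, ← star_mulVec, hw, star_smul, star_star]
  have key : star w ⬝ᵥ (P *ᵥ w)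
      = (μ * star μ) * (star w ⬝ᵥ (P *ᵥ w)) + star w ⬝ᵥ (S *ᵥ w) := by
    conv_lhs => rw [hlyap]
    rw [add_mulVec, dotProduct_add, ← mulVec_mulVec, ← mulVec_mulVec, hw, dotProduct_mulVec,
      hwN, mulVec_smul, smul_dotProduct, dotProduct_smul, smul_eq_mul, smul_eq_mul, mul_assoc]
  have hre := congrArg RCLike.re key
  rw [RCLike.star_def, RCLike.mul_conj, map_add, ← RCLike.ofReal_pow,
    RCLike.re_ofReal_mul] at hre
  have hp := (RCLike.pos_iff.mp (hP.dotProduct_mulVec_pos hw0)).1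
  have hs := (RCLike.pos_iff.mp (hS.dotProduct_mulVec_pos hw0)).1
  have hsq : ‖μ‖ ^ 2 < 1 := by nlinarith
  exact (sq_lt_one_iff₀ (norm_nonneg μ)).mp hsq

theorem re_star_dotProduct_map_ofReal_mulVec (P : Matrix n n ℝ) (x : n → ℂ) :
    (star x ⬝ᵥ (P.map (algebraMap ℝ ℂ) *ᵥ x)).re =
      (fun i ↦ (x i).re) ⬝ᵥ (P *ᵥ fun i ↦ (x i).re) +
        (fun i ↦ (x i).im) ⬝ᵥ (P *ᵥ fun i ↦ (x i).im) := by
  simp only [dotProduct, mulVec, map_apply, Pi.star_apply, Finset.mul_sum, Complex.re_sum,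
    ← Finset.sum_add_distrib]
  refine Finset.sum_congr rfl fun i _ ↦ Finset.sum_congr rfl fun j _ ↦ ?_
  simp only [RCLike.star_def, Complex.mul_re, Complex.mul_im, Complex.conj_re, Complex.conj_im,
    Complex.coe_algebraMap, Complex.ofReal_re, Complex.ofReal_im]
  ring

theorem PosDef.map_ofReal {P : Matrix n n ℝ} (hP : P.PosDef) :
    (P.map (algebraMap ℝ ℂ)).PosDef := by
  have hH : (P.map (algebraMap ℝ ℂ)).IsHermitian := hP.1.map _ fun x ↦ by simp
  refine .of_dotProduct_mulVec_pos hH fun x hx ↦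
    RCLike.pos_iff.mpr ⟨?_, hH.im_star_dotProduct_mulVec_self x⟩
  rw [RCLike.re_to_complex, re_star_dotProduct_map_ofReal_mulVec]
  have hquad (v : n → ℝ) : 0 ≤ v ⬝ᵥ (P *ᵥ v) := by
    simpa using hP.posSemidef.dotProduct_mulVec_nonneg v
  have hquad_pos {v : n → ℝ} (hv : v ≠ 0) : 0 < v ⬝ᵥ (P *ᵥ v) := by
    simpa using hP.dotProduct_mulVec_pos hv
  obtain hre | him : (fun i ↦ (x i).re) ≠ 0 ∨ (fun i ↦ (x i).im) ≠ 0 := by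
    contrapose! hx
    ext i : 1
    exact Complex.ext (congrFun hx.1 i) (congrFun hx.2 i)
  · exact add_pos_of_pos_of_nonneg (hquad_pos hre) (hquad _)
  · exact add_pos_of_nonneg_of_pos (hquad _) (hquad_pos him)

theorem norm_lt_one_of_mem_spectrum_map_ofReal_of_posDef_lyapunov [DecidableEq n]
    {M P S : Matrix n n ℝ} (hP : P.PosDef) (hS : S.PosDef) (hlyap : P = M * P * Mᵀ + S)
    {μ : ℂ} (hμ : μ ∈ spectrum ℂ (M.map (algebraMap ℝ ℂ))) : ‖μ‖ < 1 := by
  refine norm_lt_one_of_mem_spectrum_of_posDef_lyapunov hP.map_ofReal hS.map_ofReal ?_ hμ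
  rw [← conjTranspose_eq_transpose_of_trivial] at hlyap
  have := congrArg (RingHom.mapMatrix (algebraMap ℝ ℂ)) hlyap
  simp only [map_add, map_mul, RingHom.mapMatrix_apply] at this
  rwa [conjTranspose_map _ fun x ↦ by simp] at this

theorem tendsto_pow_mulVec_atTop_nhds_zero [DecidableEq n] {M : Matrix n n ℝ}
    (h : ∀ μ ∈ spectrum ℂ (M.map (algebraMap ℝ ℂ)), ‖μ‖ < 1) (e : n → ℝ) :
    Tendsto (fun k ↦ M ^ k *ᵥ e) atTop (𝓝 0) := by
  have hN : Tendsto (M.map (algebraMap ℝ ℂ) ^ ·) atTop (𝓝 0) := by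
    -- any Banach-algebra norm will do: all of them induce the entrywise topology
    open scoped Matrix.Norms.L2Operator in
    exact tendsto_pow_atTop_nhds_zero_of_norm_spectrum_lt_one h
  have hre (k : ℕ) : (M.map (algebraMap ℝ ℂ) ^ k).map Complex.re = M ^ k := by
    rw [← RingHom.mapMatrix_apply, ← map_pow, RingHom.mapMatrix_apply, map_map]
    simp [Function.comp_def]
  have hM : Tendsto (M ^ ·) atTop (𝓝 0) := by
    simpa only [Function.comp_def, id_eq, hre, Matrix.map_zero, Complex.zero_re] using
      ((continuous_id.matrix_map Complex.continuous_re).tendsto 0).comp hN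
  simpa [Function.comp_def] using
    ((continuous_id.matrix_mulVec continuous_const).tendsto 0).comp hM

end Matrix

theorem stmt_11_general {n n₁ m : ℕ}
    (A : Matrix (Fin n₁) (Fin n) ℝ)
    (Q : Matrix (Fin n₁) (Fin n₁) ℝ) (R : Matrix (Fin m) (Fin m) ℝ)
    (Pp : Matrix (Fin n) (Fin n) ℝ)
    (hPp : Pp.PosDef)
    (L : Matrix (Fin n) (Fin n₁) ℝ) (K : Matrix (Fin n) (Fin m) ℝ)
    (hlyap : Pp = (L * A) * Pp * (L * A)ᵀ + L * Q * Lᵀ + K * R * Kᵀ)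
    (hpos : (L * Q * Lᵀ + K * R * Kᵀ).PosDef) :
    (∀ μ ∈ spectrum ℂ ((L * A).map (algebraMap ℝ ℂ)), ‖μ‖ < 1) ∧
    ∀ e₀ : Fin n → ℝ,
      Tendsto (fun k : ℕ => ((L * A) ^ k) *ᵥ e₀) atTop (nhds 0) := by
  have hspec : ∀ μ ∈ spectrum ℂ ((L * A).map (algebraMap ℝ ℂ)), ‖μ‖ < 1 := fun _ ↦
    norm_lt_one_of_mem_spectrum_map_ofReal_of_posDef_lyapunov hPp hpos
      (hlyap.trans (add_assoc _ _ _))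
  exact ⟨hspec, tendsto_pow_mulVec_atTop_nhds_zero hspec⟩

/-- Stability of the steady-state descriptor Kalman filter: if `P∞⁺ > 0` satisfies the
Lyapunov form `P∞⁺ = (LA)P∞⁺(LA)ᵀ + LQLᵀ + KRKᵀ` and `LQLᵀ + KRKᵀ` is positive definite,
then `LA` has spectral radius `< 1` and the noise-free error dynamics
`x̃_{k+1} = (LA) x̃_k` converge to zero from any initial error. -/
theorem stmt_11 {n n₁ m : ℕ}
    (E A : Matrix (Fin n₁) (Fin n) ℝ) (H : Matrix (Fin m) (Fin n) ℝ)
    (Q : Matrix (Fin n₁) (Fin n₁) ℝ) (R : Matrix (Fin m) (Fin m) ℝ)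
    (Pp : Matrix (Fin n) (Fin n) ℝ)
    (hQ : Q.PosDef) (hR : R.PosDef) (hPp : Pp.PosDef)
    (hrank : (Matrix.fromRows E H).rank = n)
    (L : Matrix (Fin n) (Fin n₁) ℝ) (K : Matrix (Fin n) (Fin m) ℝ)
    (hL : L = Pp * Eᵀ * (A * Pp * Aᵀ + Q)⁻¹)
    (hK : K = Pp * Hᵀ * R⁻¹)
    (hlyap : Pp = (L * A) * Pp * (L * A)ᵀ + L * Q * Lᵀ + K * R * Kᵀ)
    (hpos : (L * Q * Lᵀ + K * R * Kᵀ).PosDef) :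
    (∀ μ ∈ spectrum ℂ ((L * A).map (algebraMap ℝ ℂ)), ‖μ‖ < 1) ∧
    ∀ e₀ : Fin n → ℝ,
      Tendsto (fun k : ℕ => ((L * A) ^ k) *ᵥ e₀) atTop (nhds 0) :=
  stmt_11_general A Q R Pp hPp L K hlyap hpos
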